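/- arXiv:1809.02636 — 2 statements merged into one kernel-verified Lean document; each statement's English description precedes it below -/
import Mathlib

section
/- Let G be a finite simple graph in which every vertex has degree at least 2, and in which every degree-2 vertex has both neighbors of degree at least 3 and its two neighbors non-adjacent. Let v be a vertex of degree 4 with N(v) = {u₁, u₂, u₃, u₄}, such that the only edges among u₁, u₂, u₃, u₄ are u₁u₂ and u₃u₄, each uᵢ has exactly one neighbor u′ᵢ outside N[v], and u′₁, u′₂, u′₃, u′₄ are pairwise distinct. Then there is a chain x, x₁, x₂, x₃ in the graph G − v such that the graph G − {v, x, x₁, x₂, x₃} contains one of the following structures: (1) a connected component of size at least 4 whose induced subgraph is a chordless path or a chordless cycle, or (2) a chain y, y₁, y₂, y₃. -/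
/-!
In `G - v` both `u₁u₂` and `u₃u₄` are edges whose endpoints have degree 2 and distinct outer
neighbours. If `u₁'` has degree at least 3, then `u₁', u₁, u₂, u₂'` is a chain of `G - v`;
otherwise the second neighbour `w` of `u₁'` has degree at least 3 and `w, u₁', u₁, u₂` is one.
Removing the chain leaves `u₃u₄` with its outer neighbours, provided `w ∉ {u₃', u₄'}`; when this
fails, `u₃'` or `u₄'` has degree at least 3 and the first case applies to `u₃u₄`. Finally, such
an edge either lies in a component of maximum degree 2, which is a path or a cycle (a longest
path exhausts it) on at least four vertices, or it is joined to a vertex of degree at least 3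
by a path through vertices of degree 2, and the first vertices of that path form a second chain.
-/

/-- A chain of the induced subgraph `G[s]`: vertices `x, x₁, x₂, x₃ ∈ s`
forming a path with `x ≠ x₃`, `deg_{G[s]} x ≥ 3` and
`deg_{G[s]} x₁ = deg_{G[s]} x₂ = 2` (the degree of `w` in `G[s]` is
`|N_G(w) ∩ s|`). -/
def ChainInInduced {V : Type*} (G : SimpleGraph V) (s : Set V) (x x1 x2 x3 : V) : Prop :=
  x ∈ s ∧ x1 ∈ s ∧ x2 ∈ s ∧ x3 ∈ s ∧
  G.Adj x x1 ∧ G.Adj x1 x2 ∧ G.Adj x2 x3 ∧ x ≠ x3 ∧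
  3 ≤ (G.neighborSet x ∩ s).ncard ∧
  (G.neighborSet x1 ∩ s).ncard = 2 ∧ (G.neighborSet x2 ∩ s).ncard = 2

lemma Fin.val_sub_eq_one_iff {n : ℕ} (hn : 1 ≤ n) (i j : Fin (n + 1)) :
    (i - j).val = 1 ↔ i.val = j.val + 1 ∨ (i.val = 0 ∧ j.val = n) := by
  rcases le_or_gt j i with h | h
  · rw [Fin.coe_sub_iff_le.mpr h]; omega
  · rw [Fin.coe_sub_iff_lt.mpr h]; omega

open SimpleGraph

namespace SimpleGraph

variable {W : Type*} {H : SimpleGraph W}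

lemma three_le_ncard_neighborSet [Finite W] {w x y z : W} (hx : H.Adj w x) (hy : H.Adj w y)
    (hz : H.Adj w z) (hxy : x ≠ y) (hxz : x ≠ z) (hyz : y ≠ z) :
    3 ≤ (H.neighborSet w).ncard := by
  rw [← Set.ncard_eq_three.mpr ⟨x, y, z, hxy, hxz, hyz, rfl⟩]
  exact Set.ncard_le_ncard (by rintro t (rfl | rfl | rfl) <;> assumption)

lemma ncard_neighborSet_eq_two [Finite W] {w x y : W} (hx : H.Adj w x) (hy : H.Adj w y)
    (hxy : x ≠ y) (hle : (H.neighborSet w).ncard ≤ 2) :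
    (H.neighborSet w).ncard = 2 := by
  refine le_antisymm hle ?_
  rw [← Set.ncard_pair hxy]
  exact Set.ncard_le_ncard (by rintro t (rfl | rfl) <;> assumption)

lemma neighborSet_inter_eq_pair {s : Set W} {v x y z : W} (hN : H.neighborSet x = {v, y, z})
    (hv : v ∉ s) (hy : y ∈ s) (hz : z ∈ s) : H.neighborSet x ∩ s = {y, z} := by
  rw [hN, Set.insert_inter_of_notMem hv, Set.insert_inter_of_mem hy,
    Set.singleton_inter_of_mem hz]

lemma ncard_neighborSet_inter_eq_two {s : Set W} {v x y z : W}
    (hN : H.neighborSet x = {v, y, z}) (hv : v ∉ s) (hy : y ∈ s) (hz : z ∈ s) (hyz : y ≠ z) :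
    (H.neighborSet x ∩ s).ncard = 2 := by
  rw [neighborSet_inter_eq_pair hN hv hy hz, Set.ncard_pair hyz]

lemma neighborSet_inter_compl_singleton {v x : W} (h : ¬H.Adj x v) :
    H.neighborSet x ∩ {v}ᶜ = H.neighborSet x :=
  Set.inter_eq_left.mpr fun _ hz hzv => h ((Set.mem_singleton_iff.mp hzv) ▸ hz)

lemma ncard_neighborSet_induce (s : Set W) (w : s) :
    ((H.induce s).neighborSet w).ncard = (H.neighborSet w ∩ s).ncard := by
  rw [neighborSet_induce, ← Set.preimage_inter_range, Subtype.range_coe,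
    Set.ncard_preimage_of_injective_subset_range Subtype.val_injective (by simp)]

lemma neighborSet_induce_eq_pair {s : Set W} {v : W} {x y z : s}
    (hN : H.neighborSet x = {v, (y : W), (z : W)}) (hv : v ∉ s) :
    (H.induce s).neighborSet x = {y, z} := by
  ext w
  have := congrArg (w.1 ∈ ·) (neighborSet_inter_eq_pair hN hv y.2 z.2)
  simp only [Set.mem_inter_iff, w.2, and_true, mem_neighborSet, Set.mem_insert_iff,
    Set.mem_singleton_iff, eq_iff_iff] at this
  simp [neighborSet_induce, this, Subtype.ext_iff]

namespace Walk

variable {u v : W} {p : H.Walk u v}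

lemma IsPath.eq_getVert_of_adj [Finite W] (hp : p.IsPath) {i : ℕ} {z : W} (hi0 : 0 < i)
    (hi : i < p.length) (hdeg : (H.neighborSet (p.getVert i)).ncard ≤ 2)
    (hz : H.Adj (p.getVert i) z) : z = p.getVert (i - 1) ∨ z = p.getVert (i + 1) := by
  by_contra! hne
  have hprev : H.Adj (p.getVert i) (p.getVert (i - 1)) := by
    simpa [Nat.sub_add_cancel hi0] using (p.adj_getVert_succ (i := i - 1) (by omega)).symm
  have hne' : p.getVert (i - 1) ≠ p.getVert (i + 1) := fun h => by
    have := hp.getVert_injOn (by simp; omega) (by simp; omega) h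
    omega
  have := three_le_ncard_neighborSet hprev (p.adj_getVert_succ hi) hz hne' hne.1.symm hne.2.symm
  omega

lemma IsPath.adj_getVert_iff [Finite W] (hp : p.IsPath)
    (hdeg : ∀ w, (H.neighborSet w).ncard ≤ 2) {i j : ℕ} (hi : i ≤ p.length) (hj : j ≤ p.length) :
    H.Adj (p.getVert i) (p.getVert j) ↔
      i + 1 = j ∨ j + 1 = i ∨
        (H.Adj u v ∧ ((i = 0 ∧ j = p.length) ∨ (i = p.length ∧ j = 0))) := by
  have hinj : ∀ {k l}, k ≤ p.length → l ≤ p.length → p.getVert k = p.getVert l → k = l :=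
    fun hk hl h => hp.getVert_injOn (by simpa using hk) (by simpa using hl) h
  suffices key : ∀ {i j}, i < j → j ≤ p.length → H.Adj (p.getVert i) (p.getVert j) →
      j = i + 1 ∨ (i = 0 ∧ j = p.length) by
    constructor
    · intro hadj
      rcases lt_trichotomy i j with hij | rfl | hij
      · rcases key hij hj hadj with h | ⟨rfl, rfl⟩
        · omega
        · exact .inr (.inr ⟨by simpa using hadj, .inl ⟨rfl, rfl⟩⟩)
      · exact absurd hadj (H.irrefl)
      · rcases key hij hi hadj.symm with h | ⟨rfl, rfl⟩
        · omega
        · exact .inr (.inr ⟨by simpa using hadj.symm, .inr ⟨rfl, rfl⟩⟩)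
    · rintro (rfl | rfl | ⟨huv, ⟨rfl, rfl⟩ | ⟨rfl, rfl⟩⟩)
      · exact p.adj_getVert_succ (by omega)
      · exact (p.adj_getVert_succ (by omega)).symm
      · simpa using huv
      · simpa using huv.symm
  intro i j hij hj hadj
  rcases Nat.eq_zero_or_pos i with rfl | hi0
  · rcases hj.lt_or_eq with hjl | rfl
    · rcases hp.eq_getVert_of_adj (by omega) hjl (hdeg _) hadj.symm with h | h
      · exact .inl (by have := hinj (by omega) (by omega) h; omega)
      · exact absurd (hinj (by omega) (by omega) h) (by omega)
    · exact .inr ⟨rfl, rfl⟩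
  · rcases hp.eq_getVert_of_adj hi0 (by omega) (hdeg _) hadj with h | h
    · exact absurd (hinj hj (by omega) h) (by omega)
    · exact .inl (hinj hj (by omega) h)

end Walk

lemma exists_isPath_length_max [Finite W] [Nonempty W] :
    ∃ (x y : W) (p : H.Walk x y), p.IsPath ∧
      ∀ (x' y' : W) (q : H.Walk x' y'), q.IsPath → q.length ≤ p.length := by
  have := Fintype.ofFinite W
  set lengths : Set ℕ := {n | ∃ (x y : W) (p : H.Walk x y), p.IsPath ∧ p.length = n}
  have hne : lengths.Nonempty :=
    ⟨0, Classical.arbitrary W, _, .nil, Walk.IsPath.nil, rfl⟩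
  have hbdd : BddAbove lengths := ⟨Fintype.card W, by
    rintro n ⟨x, y, p, hp, rfl⟩
    exact hp.length_lt.le⟩
  obtain ⟨x, y, p, hp, hlen⟩ := Nat.sSup_mem hne hbdd
  exact ⟨x, y, p, hp, fun x' y' q hq => hlen ▸ le_csSup hbdd ⟨x', y', q, hq, rfl⟩⟩

lemma Connected.mem_support_of_isPath_length_max [Finite W] (hconn : H.Connected)
    (hdeg : ∀ w, (H.neighborSet w).ncard ≤ 2) {u v : W} {p : H.Walk u v} (hp : p.IsPath)
    (hmax : ∀ (x' y' : W) (q : H.Walk x' y'), q.IsPath → q.length ≤ p.length) (z : W) :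
    z ∈ p.support := by
  -- a vertex off `p` next to an end of `p` would extend it, and one next to an interior vertex
  -- would give that vertex a third neighbour
  by_contra hz
  obtain ⟨q⟩ := hconn.preconnected u z
  obtain ⟨⟨⟨t, t'⟩, htt'⟩, -, ht, ht'⟩ :=
    q.exists_boundary_dart {w | w ∈ p.support} p.start_mem_support hz
  simp only [Set.mem_ofPred_eq] at ht ht' htt'
  obtain ⟨i, rfl, hi⟩ := Walk.mem_support_iff_exists_getVert.mp ht
  rcases Nat.eq_zero_or_pos i with rfl | hi0
  · rw [Walk.getVert_zero] at htt'
    have := hmax _ _ _ ((Walk.cons_isPath_iff htt'.symm p).mpr ⟨hp, ht'⟩)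
    simp at this
  rcases hi.lt_or_eq with hil | rfl
  · rcases hp.eq_getVert_of_adj hi0 hil (hdeg _) htt' with rfl | rfl <;>
      exact ht' (Walk.getVert_mem_support _ _)
  · rw [Walk.getVert_length] at htt'
    have := hmax _ _ _ ((Walk.cons_isPath_iff htt'.symm p.reverse).mpr
      ⟨hp.reverse, by simpa using ht'⟩)
    simp at this

theorem Connected.exists_iso_pathGraph_or_cycleGraph [Finite W] (hconn : H.Connected)
    (hdeg : ∀ w, (H.neighborSet w).ncard ≤ 2) :
    (∃ n, Nonempty (H ≃g pathGraph n)) ∨ ∃ n, Nonempty (H ≃g cycleGraph n) := by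
  have := hconn.nonempty
  obtain ⟨x, y, p, hp, hmax⟩ := exists_isPath_length_max (H := H)
  set N := p.length with hN
  have hbij : Function.Bijective fun i : Fin (N + 1) => p.getVert i := by
    refine ⟨fun i j h => Fin.ext (hp.getVert_injOn (by simp; omega) (by simp; omega) h),
      fun z => ?_⟩
    obtain ⟨i, hiz, hi⟩ := Walk.mem_support_iff_exists_getVert.mp
      (hconn.mem_support_of_isPath_length_max hdeg hp hmax z)
    exact ⟨⟨i, by omega⟩, hiz⟩
  let e := Equiv.ofBijective _ hbij
  have hadj (i j : Fin (N + 1)) := hp.adj_getVert_iff hdeg (i := i) (j := j) (by omega) (by omega)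
  by_cases hcyc : H.Adj x y ∧ 2 ≤ N
  · refine .inr ⟨N + 1, ⟨(RelIso.symm ⟨e, fun {i j} => ?_⟩)⟩⟩
    rw [Equiv.ofBijective_apply, Equiv.ofBijective_apply, hadj, cycleGraph_adj',
      Fin.val_sub_eq_one_iff (by omega), Fin.val_sub_eq_one_iff (by omega)]
    simp only [hcyc.1, true_and]
    omega
  · refine .inl ⟨N + 1, ⟨(RelIso.symm ⟨e, fun {i j} => ?_⟩)⟩⟩
    rw [Equiv.ofBijective_apply, Equiv.ofBijective_apply, hadj, pathGraph_adj]
    by_cases hxy : H.Adj x y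
    · simp only [hxy, true_and, not_le] at hcyc ⊢
      have : N ≠ 0 := fun h => hxy.ne (p.eq_of_length_eq_zero h)
      omega
    · simp only [hxy, false_and, or_false]

lemma Reachable.exists_isPath_from_three_le_ncard {u w : W} (h : H.Reachable u w)
    (hw : 3 ≤ (H.neighborSet w).ncard) :
    ∃ (x : W) (p : H.Walk x u), p.IsPath ∧ 3 ≤ (H.neighborSet x).ncard ∧
      ∀ i, 0 < i → i ≤ p.length → (H.neighborSet (p.getVert i)).ncard ≤ 2 := by
  classical
  -- reverse the initial segment of a path `u → w` ending at its first vertex of degree `≥ 3`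
  obtain ⟨q, hq⟩ := h.exists_isPath
  have hex : ∃ i, 3 ≤ (H.neighborSet (q.getVert i)).ncard := ⟨q.length, by simpa⟩
  have hk : Nat.find hex ≤ q.length := Nat.find_min' hex (by simpa)
  refine ⟨_, (q.take (Nat.find hex)).reverse, (hq.take _).reverse, Nat.find_spec hex,
    fun i hi0 hi => ?_⟩
  simp only [Walk.length_reverse, Walk.take_length, min_eq_left hk] at hi
  rw [Walk.getVert_reverse, Walk.take_getVert, Walk.take_length, min_eq_left hk,
    min_eq_right (Nat.sub_le _ _)]
  have := Nat.find_min hex (show Nat.find hex - i < Nat.find hex by omega)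
  omega

def IsChain (H : SimpleGraph W) (y y1 y2 y3 : W) : Prop :=
  H.Adj y y1 ∧ H.Adj y1 y2 ∧ H.Adj y2 y3 ∧ y ≠ y3 ∧
    3 ≤ (H.neighborSet y).ncard ∧ (H.neighborSet y1).ncard = 2 ∧ (H.neighborSet y2).ncard = 2

def HasLongPathOrCycleComponent (H : SimpleGraph W) : Prop :=
  ∃ c : H.ConnectedComponent, 4 ≤ c.supp.ncard ∧
    ((∃ n, Nonempty (H.induce c.supp ≃g pathGraph n)) ∨
      ∃ n, Nonempty (H.induce c.supp ≃g cycleGraph n))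

lemma isChain_of_ncard_le_two [Finite W] {y y1 y2 y3 : W} (h01 : H.Adj y y1) (h12 : H.Adj y1 y2)
    (h23 : H.Adj y2 y3) (h02 : y ≠ y2) (h13 : y1 ≠ y3) (h03 : y ≠ y3)
    (hy : 3 ≤ (H.neighborSet y).ncard) (hy1 : (H.neighborSet y1).ncard ≤ 2)
    (hy2 : (H.neighborSet y2).ncard ≤ 2) : H.IsChain y y1 y2 y3 :=
  ⟨h01, h12, h23, h03, hy, ncard_neighborSet_eq_two h01.symm h12 h02 hy1,
    ncard_neighborSet_eq_two h12.symm h23 h13 hy2⟩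

lemma IsChain.chainInInduced {G : SimpleGraph W} {s : Set W} {y y1 y2 y3 : s}
    (h : (G.induce s).IsChain y y1 y2 y3) : ChainInInduced G s y y1 y2 y3 := by
  obtain ⟨h01, h12, h23, h03, hy, hy1, hy2⟩ := h
  simp only [ncard_neighborSet_induce] at hy hy1 hy2
  exact ⟨y.2, y1.2, y2.2, y3.2, h01, h12, h23, Subtype.coe_ne_coe.mpr h03, hy, hy1, hy2⟩

lemma exists_isChain_of_isPath [Finite W] {a b a' b' w : W} (hab : H.Adj a b)
    (hNa : H.neighborSet a = {b, a'}) (hNb : H.neighborSet b = {a, b'})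
    (hba' : b ≠ a') (hab' : a ≠ b') (ha'b' : a' ≠ b') {p : H.Walk w a} (hp : p.IsPath)
    (hw : 3 ≤ (H.neighborSet w).ncard)
    (hdeg : ∀ i, 0 < i → i ≤ p.length → (H.neighborSet (p.getVert i)).ncard ≤ 2) :
    ∃ y y1 y2 y3, H.IsChain y y1 y2 y3 := by
  have haa' : H.Adj a a' := by simp [← mem_neighborSet, hNa]
  have hbb' : H.Adj b b' := by simp [← mem_neighborSet, hNb]
  have hdega : (H.neighborSet a).ncard = 2 := by rw [hNa, Set.ncard_pair hba']
  have hdegb : (H.neighborSet b).ncard = 2 := by rw [hNb, Set.ncard_pair hab']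
  have hne : ∀ {i j}, i ≤ p.length → j ≤ p.length → i ≠ j → p.getVert i ≠ p.getVert j :=
    fun hi hj hij h => hij (hp.getVert_injOn (by simpa using hi) (by simpa using hj) h)
  have hadj : ∀ i < p.length, H.Adj (p.getVert i) (p.getVert (i + 1)) :=
    fun i hi => p.adj_getVert_succ hi
  have hlast : p.getVert p.length = a := p.getVert_length
  obtain hk | hk | hk | hk : p.length = 0 ∨ p.length = 1 ∨ p.length = 2 ∨ 3 ≤ p.length := by
    omega
  · cases p.eq_of_length_eq_zero hk
    omega
  · -- `w` is adjacent to `a` and has degree `≥ 3`, so it is `a'` and not `b`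
    rw [hk] at hlast
    have hwa : w ∈ H.neighborSet a := by simpa [hlast] using (hadj 0 (by omega)).symm
    rw [hNa] at hwa
    obtain rfl | rfl := hwa
    · omega
    · exact ⟨w, a, b, b', isChain_of_ncard_le_two haa'.symm hab hbb' hba'.symm hab' ha'b'
        hw hdega.le hdegb.le⟩
  · rw [hk] at hlast
    have hwm : H.Adj w (p.getVert 1) := by simpa using hadj 0 (by omega)
    have hma : H.Adj (p.getVert 1) a := by simpa [hlast] using hadj 1 (by omega)
    have hwa : w ≠ a := by
      simpa [hlast] using hne (i := 0) (j := 2) (by omega) (by omega) (by omega)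
    have hm : p.getVert 1 ∈ H.neighborSet a := hma.symm
    rw [hNa] at hm
    obtain hm | hm := hm <;> rw [hm] at hwm
    · -- the path is `w, b, a` and `w ≠ a`, so `w = b'`
      have hwb' : w ∈ H.neighborSet b := hwm.symm
      rw [hNb] at hwb'
      obtain rfl | rfl := hwb'
      · exact absurd rfl hwa
      · exact ⟨w, b, a, a', isChain_of_ncard_le_two hwm hab.symm haa' hwa hba' ha'b'.symm hw
          hdegb.le hdega.le⟩
    · exact ⟨w, a', a, b, isChain_of_ncard_le_two hwm haa'.symm hab hwa hba'.symm
        (by rintro rfl; omega) hw (hm ▸ hdeg 1 (by omega) (by omega)) hdega.le⟩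
  · refine ⟨w, p.getVert 1, p.getVert 2, p.getVert 3, isChain_of_ncard_le_two
      (by simpa using hadj 0 (by omega)) (hadj 1 (by omega)) (hadj 2 (by omega)) ?_ ?_ ?_ hw
      (hdeg 1 (by omega) (by omega)) (hdeg 2 (by omega) (by omega))⟩
    · simpa using hne (i := 0) (j := 2) (by omega) (by omega) (by omega)
    · exact hne (by omega) (by omega) (by omega)
    · simpa using hne (i := 0) (j := 3) (by omega) (by omega) (by omega)

theorem hasLongPathOrCycleComponent_or_isChain [Finite W] {a b a' b' : W} (hab : H.Adj a b)
    (hNa : H.neighborSet a = {b, a'}) (hNb : H.neighborSet b = {a, b'})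
    (hba' : b ≠ a') (hab' : a ≠ b') (ha'b' : a' ≠ b') :
    H.HasLongPathOrCycleComponent ∨ ∃ y y1 y2 y3, H.IsChain y y1 y2 y3 := by
  by_cases hsmall : ∀ w, H.Reachable a w → (H.neighborSet w).ncard ≤ 2
  · have haa' : H.Adj a a' := by simp [← mem_neighborSet, hNa]
    have hbb' : H.Adj b b' := by simp [← mem_neighborSet, hNb]
    set C := H.connectedComponentMk a
    have haC : a ∈ C.supp := rfl
    have hsub : ({a, b, a', b'} : Set W) ⊆ C.supp := by
      rintro t (rfl | rfl | rfl | rfl)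
      · exact haC
      · exact C.mem_supp_of_adj_mem_supp haC hab
      · exact C.mem_supp_of_adj_mem_supp haC haa'
      · exact C.mem_supp_of_adj_mem_supp (C.mem_supp_of_adj_mem_supp haC hab) hbb'
    refine .inl ⟨C, ?_, C.connected_toSimpleGraph.exists_iso_pathGraph_or_cycleGraph fun w => ?_⟩
    · refine le_trans (le_of_eq ?_) (Set.ncard_le_ncard hsub)
      rw [Set.ncard_insert_of_notMem (by simp [hab.ne, haa'.ne, hab']),
        Set.ncard_insert_of_notMem (by simp [hba', hbb'.ne]), Set.ncard_pair ha'b']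
    · rw [ConnectedComponent.toSimpleGraph, ncard_neighborSet_induce]
      exact (Set.ncard_inter_le_ncard_left _ _).trans
        (hsmall w (C.reachable_of_mem_supp haC w.2))
  push Not at hsmall
  obtain ⟨w0, hw0, hw0deg⟩ := hsmall
  obtain ⟨w, p, hp, hw, hdeg⟩ := hw0.exists_isPath_from_three_le_ncard hw0deg
  exact .inr (exists_isChain_of_isPath hab hNa hNb hba' hab' ha'b' hp hw hdeg)

end SimpleGraph

section

variable {V : Type*} {G : SimpleGraph V}

def HasLongPathCycleOrChain (G : SimpleGraph V) (s : Set V) : Prop :=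
  (G.induce s).HasLongPathOrCycleComponent ∨ ∃ y y1 y2 y3, ChainInInduced G s y y1 y2 y3

theorem hasLongPathCycleOrChain_of_neighborSet_eq [Finite V] {s : Set V} {v c d c' d' : V}
    (hv : v ∉ s) (hc : c ∈ s) (hd : d ∈ s) (hc' : c' ∈ s) (hd' : d' ∈ s)
    (hNc : G.neighborSet c = {v, d, c'}) (hNd : G.neighborSet d = {v, c, d'})
    (hdc' : d ≠ c') (hcd' : c ≠ d') (hc'd' : c' ≠ d') : HasLongPathCycleOrChain G s := by
  have hcd : G.Adj c d := by simp [← mem_neighborSet, hNc]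
  rcases hasLongPathOrCycleComponent_or_isChain (H := G.induce s) (a := ⟨c, hc⟩) (b := ⟨d, hd⟩)
      (a' := ⟨c', hc'⟩) (b' := ⟨d', hd'⟩) hcd (neighborSet_induce_eq_pair hNc hv)
      (neighborSet_induce_eq_pair hNd hv) (by simpa) (by simpa) (by simpa) with
    h | ⟨y, y1, y2, y3, h⟩
  · exact .inl h
  · exact .inr ⟨y, y1, y2, y3, h.chainInInduced⟩

structure TwoEdgeNeighborhood (G : SimpleGraph V) (v a b c d a' b' c' d' : V) : Prop where
  neighborSet_center : G.neighborSet v = {a, b, c, d}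
  adj_ab : G.Adj a b
  adj_cd : G.Adj c d
  not_adj_ac : ¬G.Adj a c
  not_adj_ad : ¬G.Adj a d
  not_adj_bc : ¬G.Adj b c
  not_adj_bd : ¬G.Adj b d
  outer_a : G.neighborSet a \ insert v (G.neighborSet v) = {a'}
  outer_b : G.neighborSet b \ insert v (G.neighborSet v) = {b'}
  outer_c : G.neighborSet c \ insert v (G.neighborSet v) = {c'}
  outer_d : G.neighborSet d \ insert v (G.neighborSet v) = {d'}
  ne_a'_b' : a' ≠ b'
  ne_a'_c' : a' ≠ c'
  ne_a'_d' : a' ≠ d'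
  ne_b'_c' : b' ≠ c'
  ne_b'_d' : b' ≠ d'
  ne_c'_d' : c' ≠ d'

namespace TwoEdgeNeighborhood

variable {v a b c d a' b' c' d' : V}

theorem swap_ab (h : TwoEdgeNeighborhood G v a b c d a' b' c' d') :
    TwoEdgeNeighborhood G v b a c d b' a' c' d' :=
  ⟨by rw [h.neighborSet_center, Set.insert_comm], h.adj_ab.symm, h.adj_cd, h.not_adj_bc,
    h.not_adj_bd, h.not_adj_ac, h.not_adj_ad, h.outer_b, h.outer_a, h.outer_c, h.outer_d,
    h.ne_a'_b'.symm, h.ne_b'_c', h.ne_b'_d', h.ne_a'_c', h.ne_a'_d', h.ne_c'_d'⟩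

theorem swap_edges (h : TwoEdgeNeighborhood G v a b c d a' b' c' d') :
    TwoEdgeNeighborhood G v c d a b c' d' a' b' :=
  ⟨by rw [h.neighborSet_center]; ext; simp only [Set.mem_insert_iff, Set.mem_singleton_iff]; tauto,
    h.adj_cd, h.adj_ab, (h.not_adj_ac ·.symm), (h.not_adj_bc ·.symm), (h.not_adj_ad ·.symm),
    (h.not_adj_bd ·.symm), h.outer_c, h.outer_d, h.outer_a, h.outer_b, h.ne_c'_d',
    h.ne_a'_c'.symm, h.ne_b'_c'.symm, h.ne_a'_d'.symm, h.ne_b'_d'.symm, h.ne_a'_b'⟩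

theorem center_adj (h : TwoEdgeNeighborhood G v a b c d a' b' c' d') :
    G.Adj v a ∧ G.Adj v b ∧ G.Adj v c ∧ G.Adj v d := by
  simp [← mem_neighborSet, h.neighborSet_center]

theorem outer_a_ne (h : TwoEdgeNeighborhood G v a b c d a' b' c' d') :
    a' ≠ v ∧ ¬G.Adj v a' := by
  have : a' ∈ G.neighborSet a \ insert v (G.neighborSet v) := h.outer_a ▸ rfl
  simpa using this.2

theorem neighborSet_a (h : TwoEdgeNeighborhood G v a b c d a' b' c' d') :
    G.neighborSet a = {v, b, a'} := by
  have hout := Set.ext_iff.mp h.outer_a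
  ext z
  constructor
  · intro hz
    by_cases hzv : z ∈ insert v (G.neighborSet v)
    · rw [h.neighborSet_center] at hzv
      rcases hzv with rfl | rfl | rfl | rfl | rfl
      · exact .inl rfl
      · exact absurd hz (G.irrefl)
      · exact .inr (.inl rfl)
      · exact absurd hz h.not_adj_ac
      · exact absurd hz h.not_adj_ad
    · exact .inr (.inr ((hout z).mp ⟨hz, hzv⟩))
  · rintro (rfl | rfl | rfl)
    exacts [h.center_adj.1.symm, h.adj_ab, ((hout _).mpr rfl).1]

theorem adj_a_a' (h : TwoEdgeNeighborhood G v a b c d a' b' c' d') : G.Adj a a' := by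
  simp [← mem_neighborSet, h.neighborSet_a]

theorem not_adj_outer_a (h : TwoEdgeNeighborhood G v a b c d a' b' c' d') :
    ¬G.Adj b a' ∧ ¬G.Adj c a' ∧ ¬G.Adj d a' := by
  obtain ⟨ha'v, hva'⟩ := h.outer_a_ne
  obtain ⟨hva, -, hvc, hvd⟩ := h.center_adj
  simp only [← mem_neighborSet, h.swap_ab.neighborSet_a, h.swap_edges.neighborSet_a,
    h.swap_edges.swap_ab.neighborSet_a, Set.mem_insert_iff, Set.mem_singleton_iff, not_or]
  exact ⟨⟨ha'v, fun e => hva' (e ▸ hva), h.ne_a'_b'⟩, ⟨ha'v, fun e => hva' (e ▸ hvd), h.ne_a'_c'⟩,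
    ⟨ha'v, fun e => hva' (e ▸ hvc), h.ne_a'_d'⟩⟩

theorem notMem_other_side (h : TwoEdgeNeighborhood G v a b c d a' b' c' d') :
    a ∉ ({c, d, c', d'} : Set V) ∧ a' ∉ ({c, d, c', d'} : Set V) := by
  obtain ⟨-, hva'⟩ := h.outer_a_ne
  obtain ⟨-, hvc'⟩ := h.swap_edges.outer_a_ne
  obtain ⟨-, hvd'⟩ := h.swap_edges.swap_ab.outer_a_ne
  obtain ⟨hva, -, hvc, hvd⟩ := h.center_adj
  simp only [Set.mem_insert_iff, Set.mem_singleton_iff, not_or]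
  refine ⟨⟨?_, ?_, fun e => hvc' (e ▸ hva), fun e => hvd' (e ▸ hva)⟩,
    ⟨fun e => hva' (e ▸ hvc), fun e => hva' (e ▸ hvd), h.ne_a'_c', h.ne_a'_d'⟩⟩
  · rintro rfl
    exact h.not_adj_ad h.adj_cd
  · rintro rfl
    exact h.not_adj_ac h.adj_cd.symm

theorem hasLongPathCycleOrChain_compl [Finite V] (h : TwoEdgeNeighborhood G v a b c d a' b' c' d')
    {T : Set V} (hT : ∀ x ∈ T, x ∉ ({c, d, c', d'} : Set V)) :
    HasLongPathCycleOrChain G (insert v T)ᶜ := by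
  obtain ⟨hc'v, hvc'⟩ := h.swap_edges.outer_a_ne
  obtain ⟨hd'v, hvd'⟩ := h.swap_edges.swap_ab.outer_a_ne
  obtain ⟨-, -, hvc, hvd⟩ := h.center_adj
  have hmem : ∀ x ∈ ({c, d, c', d'} : Set V), x ≠ v → x ∈ (insert v T)ᶜ :=
    fun x hx hxv hxT => hxT.elim hxv (hT x · hx)
  exact hasLongPathCycleOrChain_of_neighborSet_eq (by simp) (hmem c (by simp) hvc.ne')
    (hmem d (by simp) hvd.ne') (hmem c' (by simp) hc'v) (hmem d' (by simp) hd'v)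
    h.swap_edges.neighborSet_a h.swap_edges.swap_ab.neighborSet_a
    (fun e => hvc' (e ▸ hvd)) (fun e => hvd' (e ▸ hvc)) h.ne_c'_d'

theorem exists_chain_of_three_le [Finite V] (h : TwoEdgeNeighborhood G v a b c d a' b' c' d')
    (ha' : 3 ≤ (G.neighborSet a').ncard) :
    ∃ x x1 x2 x3, ChainInInduced G {v}ᶜ x x1 x2 x3 ∧
      HasLongPathCycleOrChain G {v, x, x1, x2, x3}ᶜ := by
  obtain ⟨ha'v, hva'⟩ := h.outer_a_ne
  obtain ⟨hb'v, hvb'⟩ := h.swap_ab.outer_a_ne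
  obtain ⟨hva, hvb, -, -⟩ := h.center_adj
  refine ⟨a', a, b, b', ⟨ha'v, hva.ne', hvb.ne', hb'v, h.adj_a_a'.symm, h.adj_ab,
      h.swap_ab.adj_a_a', h.ne_a'_b', by rwa [neighborSet_inter_compl_singleton (hva' ·.symm)],
      ncard_neighborSet_inter_eq_two h.neighborSet_a (by simp) hvb.ne' ha'v
        (fun e => hva' (e ▸ hvb)),
      ncard_neighborSet_inter_eq_two h.swap_ab.neighborSet_a (by simp) hva.ne' hb'v
        (fun e => hvb' (e ▸ hva))⟩,
    h.hasLongPathCycleOrChain_compl ?_⟩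
  rintro x (rfl | rfl | rfl | rfl)
  exacts [h.notMem_other_side.2, h.notMem_other_side.1, h.swap_ab.notMem_other_side.1,
    h.swap_ab.notMem_other_side.2]

theorem exists_chain_of_ncard_eq_two [Finite V] (h : TwoEdgeNeighborhood G v a b c d a' b' c' d')
    (ha' : (G.neighborSet a').ncard = 2)
    (hnbr : ∀ z ∈ G.neighborSet a', 3 ≤ (G.neighborSet z).ncard)
    (hc' : (G.neighborSet c').ncard ≤ 2) (hd' : (G.neighborSet d').ncard ≤ 2) :
    ∃ x x1 x2 x3, ChainInInduced G {v}ᶜ x x1 x2 x3 ∧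
      HasLongPathCycleOrChain G {v, x, x1, x2, x3}ᶜ := by
  obtain ⟨w, ha'w, hwa⟩ := Set.exists_ne_of_one_lt_ncard (by omega : 1 < (G.neighborSet a').ncard) a
  have hw := hnbr w ha'w
  obtain ⟨ha'v, hva'⟩ := h.outer_a_ne
  obtain ⟨hva, hvb, -, -⟩ := h.center_adj
  obtain ⟨hba', hca', hda'⟩ := h.not_adj_outer_a
  have hwv : ¬G.Adj w v := by
    intro hwv
    have : w ∈ G.neighborSet v := hwv.symm
    rw [h.neighborSet_center] at this
    rcases this with rfl | rfl | rfl | rfl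
    exacts [hwa rfl, hba' ha'w.symm, hca' ha'w.symm, hda' ha'w.symm]
  refine ⟨w, a', a, b, ⟨fun e => hva' (e ▸ ha'w : G.Adj a' v).symm, ha'v, hva.ne', hvb.ne',
      ha'w.symm, h.adj_a_a'.symm, h.adj_ab, fun e => hba' (e ▸ ha'w).symm,
      by rwa [neighborSet_inter_compl_singleton hwv],
      by rwa [neighborSet_inter_compl_singleton (hva' ·.symm)],
      ncard_neighborSet_inter_eq_two h.neighborSet_a (by simp) hvb.ne' ha'v
        (fun e => hva' (e ▸ hvb))⟩,
    h.hasLongPathCycleOrChain_compl ?_⟩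
  rintro x (rfl | rfl | rfl | rfl)
  · simp only [Set.mem_insert_iff, Set.mem_singleton_iff, not_or]
    exact ⟨fun e => hca' (e ▸ ha'w).symm, fun e => hda' (e ▸ ha'w).symm,
      by rintro rfl; omega, by rintro rfl; omega⟩
  exacts [h.notMem_other_side.2, h.notMem_other_side.1, h.swap_ab.notMem_other_side.1]

end TwoEdgeNeighborhood

end

theorem lemma_chain_cases_general {V : Type*} [Fintype V] (G : SimpleGraph V)
    (hmin : ∀ w : V, 2 ≤ (G.neighborSet w).ncard)
    (hdeg2 : ∀ w : V, (G.neighborSet w).ncard = 2 →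
      (∀ a ∈ G.neighborSet w, 3 ≤ (G.neighborSet a).ncard) ∧
      (∀ a b : V, a ∈ G.neighborSet w → b ∈ G.neighborSet w → a ≠ b → ¬ G.Adj a b))
    (v u1 u2 u3 u4 u1' u2' u3' u4' : V)
    (hNv : G.neighborSet v = {u1, u2, u3, u4})
    (h12 : G.Adj u1 u2) (h34 : G.Adj u3 u4)
    (h13 : ¬ G.Adj u1 u3) (h14 : ¬ G.Adj u1 u4)
    (h23 : ¬ G.Adj u2 u3) (h24 : ¬ G.Adj u2 u4)
    (hout1 : G.neighborSet u1 \ insert v (G.neighborSet v) = {u1'})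
    (hout2 : G.neighborSet u2 \ insert v (G.neighborSet v) = {u2'})
    (hout3 : G.neighborSet u3 \ insert v (G.neighborSet v) = {u3'})
    (hout4 : G.neighborSet u4 \ insert v (G.neighborSet v) = {u4'})
    (hdist : List.Pairwise (· ≠ ·) [u1', u2', u3', u4']) :
    ∃ x x1 x2 x3 : V, ChainInInduced G ({v}ᶜ : Set V) x x1 x2 x3 ∧
      ((∃ c : (G.induce ({v, x, x1, x2, x3}ᶜ : Set V)).ConnectedComponent,
          4 ≤ c.supp.ncard ∧
          ((∃ n : ℕ, Nonempty
              ((G.induce ({v, x, x1, x2, x3}ᶜ : Set V)).induce c.supp ≃g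
                SimpleGraph.pathGraph n)) ∨
           (∃ n : ℕ, Nonempty
              ((G.induce ({v, x, x1, x2, x3}ᶜ : Set V)).induce c.supp ≃g
                SimpleGraph.cycleGraph n)))) ∨
       (∃ y y1 y2 y3 : V,
          ChainInInduced G ({v, x, x1, x2, x3}ᶜ : Set V) y y1 y2 y3)) := by
  obtain ⟨⟨d12, d13, d14⟩, ⟨d23, d24⟩, d34⟩ : (u1' ≠ u2' ∧ u1' ≠ u3' ∧ u1' ≠ u4') ∧
      (u2' ≠ u3' ∧ u2' ≠ u4') ∧ u3' ≠ u4' := by simpa using hdist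
  have h : TwoEdgeNeighborhood G v u1 u2 u3 u4 u1' u2' u3' u4' :=
    ⟨hNv, h12, h34, h13, h14, h23, h24, hout1, hout2, hout3, hout4, d12, d13, d14, d23, d24, d34⟩
  by_cases h1 : 3 ≤ (G.neighborSet u1').ncard
  · exact h.exists_chain_of_three_le h1
  by_cases h3 : 3 ≤ (G.neighborSet u3').ncard
  · exact h.swap_edges.exists_chain_of_three_le h3
  by_cases h4 : 3 ≤ (G.neighborSet u4').ncard
  · exact h.swap_edges.swap_ab.exists_chain_of_three_le h4
  -- now the second neighbour of `u1'` has degree `≥ 3`, so it is neither `u3'` nor `u4'`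
  have hu1' : (G.neighborSet u1').ncard = 2 := by have := hmin u1'; omega
  exact h.exists_chain_of_ncard_eq_two hu1' (hdeg2 u1' hu1').1 (by omega) (by omega)

/-- Lemma 1 (chain cases). -/
theorem lemma_chain_cases {V : Type*} [Fintype V] (G : SimpleGraph V)
    (hmin : ∀ w : V, 2 ≤ (G.neighborSet w).ncard)
    (hdeg2 : ∀ w : V, (G.neighborSet w).ncard = 2 →
      (∀ a ∈ G.neighborSet w, 3 ≤ (G.neighborSet a).ncard) ∧
      (∀ a b : V, a ∈ G.neighborSet w → b ∈ G.neighborSet w → a ≠ b → ¬ G.Adj a b))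
    (v u1 u2 u3 u4 u1' u2' u3' u4' : V)
    (hdv : (G.neighborSet v).ncard = 4)
    (hNv : G.neighborSet v = {u1, u2, u3, u4})
    (h12 : G.Adj u1 u2) (h34 : G.Adj u3 u4)
    (h13 : ¬ G.Adj u1 u3) (h14 : ¬ G.Adj u1 u4)
    (h23 : ¬ G.Adj u2 u3) (h24 : ¬ G.Adj u2 u4)
    (hout1 : G.neighborSet u1 \ insert v (G.neighborSet v) = {u1'})
    (hout2 : G.neighborSet u2 \ insert v (G.neighborSet v) = {u2'})
    (hout3 : G.neighborSet u3 \ insert v (G.neighborSet v) = {u3'})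
    (hout4 : G.neighborSet u4 \ insert v (G.neighborSet v) = {u4'})
    (hdist : List.Pairwise (· ≠ ·) [u1', u2', u3', u4']) :
    ∃ x x1 x2 x3 : V, ChainInInduced G ({v}ᶜ : Set V) x x1 x2 x3 ∧
      ((∃ c : (G.induce ({v, x, x1, x2, x3}ᶜ : Set V)).ConnectedComponent,
          4 ≤ c.supp.ncard ∧
          ((∃ n : ℕ, Nonempty
              ((G.induce ({v, x, x1, x2, x3}ᶜ : Set V)).induce c.supp ≃g
                SimpleGraph.pathGraph n)) ∨
           (∃ n : ℕ, Nonempty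
              ((G.induce ({v, x, x1, x2, x3}ᶜ : Set V)).induce c.supp ≃g
                SimpleGraph.cycleGraph n)))) ∨
       (∃ y y1 y2 y3 : V,
          ChainInInduced G ({v, x, x1, x2, x3}ᶜ : Set V) y y1 y2 y3)) :=
  lemma_chain_cases_general G hmin hdeg2 v u1 u2 u3 u4 u1' u2' u3' u4' hNv h12 h34 h13 h14 h23 h24
    hout1 hout2 hout3 hout4 hdist
end

section
/- Let G be a finite simple graph and suppose a vertex v weakly dominates some vertex. Then there exists a minimum-size 3-path vertex cover S of G such that either v ∈ S, or there exists u ∈ N(v) with N({u,v}) ⊆ S, u ∉ S, and v ∉ S. -/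
/-!
Take a minimum cover `T` with `v ∉ T`. If some neighbour `w` of `v` is also outside `T`, the
edge `vw` is a component of `G - T`, so every other neighbour of `v` or `w` lies in `T`.
Otherwise `N(v) ⊆ T`; for the weakly dominated `u`, the only neighbour of `u` that can lie
outside `N[v]` is `x`, so exchanging `u` for `x` in `T` gives a cover of at most the same size
in which the edge `uv` is uncovered, and we are back in the first case.
-/

/-- `S` is a 3-path vertex cover of `H`: every path on 3 vertices contains a
vertex of `S`. -/
def IsPVC3 {V : Type*} (H : SimpleGraph V) (S : Set V) : Prop :=
  ∀ a b c : V, H.Adj a b → H.Adj b c → a ≠ c → a ∈ S ∨ b ∈ S ∨ c ∈ S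

open Set

namespace IsPVC3

variable {V : Type*} {G : SimpleGraph V} {S T : Set V} {a b c u v x : V}

theorem univ (G : SimpleGraph V) : IsPVC3 G Set.univ :=
  fun _ _ _ _ _ _ => Or.inl trivial

theorem exists_forall_ncard_le (G : SimpleGraph V) :
    ∃ T, IsPVC3 G T ∧ ∀ T', IsPVC3 G T' → T.ncard ≤ T'.ncard := by
  obtain ⟨T, hT, hTcard⟩ := Nat.sInf_mem (s := {n | ∃ S, IsPVC3 G S ∧ S.ncard = n})
    ⟨_, Set.univ, univ G, rfl⟩
  exact ⟨T, hT, fun T' hT' => hTcard ▸ Nat.sInf_le ⟨T', hT', rfl⟩⟩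

theorem eq_of_adj_of_notMem (hS : IsPVC3 G S) (hba : G.Adj b a) (hbc : G.Adj b c)
    (ha : a ∉ S) (hb : b ∉ S) (hc : c ∉ S) : a = c := by
  by_contra hac
  rcases hS a b c hba.symm hbc hac with h | h | h <;> contradiction

theorem of_forall_adj_adj_eq
    (h : ∀ a b c, G.Adj b a → G.Adj b c → a ∉ S → b ∉ S → c ∉ S → a = c) : IsPVC3 G S := by
  intro a b c hab hbc hac
  by_contra! hS
  exact hac (h a b c hab.symm hbc hS.1 hS.2.1 hS.2.2)

theorem neighborhood_pair_subset (hS : IsPVC3 G S) (huv : G.Adj u v) (hu : u ∉ S)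
    (hv : v ∉ S) :
    ((insert u (G.neighborSet u) ∪ insert v (G.neighborSet v)) \ {u, v} : Set V) ⊆ S := by
  rintro y ⟨hy, hyuv⟩
  simp only [mem_insert_iff, mem_singleton_iff, not_or] at hyuv
  simp only [mem_union, mem_insert_iff, SimpleGraph.mem_neighborSet] at hy
  by_contra hyS
  rcases hy with (rfl | hy) | (rfl | hy)
  · exact hyuv.1 rfl
  · exact hyuv.2 (hS.eq_of_adj_of_notMem huv hy hv hu hyS).symm
  · exact hyuv.2 rfl
  · exact hyuv.1 (hS.eq_of_adj_of_notMem huv.symm hy hu hv hyS).symm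

theorem insert_diff_singleton (hT : IsPVC3 G T) (huv : G.Adj u v)
    (hNu : G.neighborSet u \ {x} ⊆ insert v (G.neighborSet v))
    (hNv : G.neighborSet v ⊆ T) (hv : v ∉ T) : IsPVC3 G (insert x (T \ {u})) := by
  set S := insert x (T \ {u})
  have notMem_T {y} (hy : y ∉ S) (hyu : y ≠ u) : y ∉ T := fun hyT =>
    hy (mem_insert_of_mem _ ⟨hyT, hyu⟩)
  have eq_v_of_adj {y} (hy : y ∉ S) (huy : G.Adj u y) : y = v := by
    have hyx : y ≠ x := by rintro rfl; exact hy (mem_insert _ _)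
    rcases hNu ⟨huy, hyx⟩ with h | h
    · exact h
    · exact absurd (hNv h) (notMem_T hy huy.ne')
  have eq_u {a b c} (hba : G.Adj b a) (hbc : G.Adj b c) (ha : a ∉ S) (hb : b ∉ S)
      (hc : c ∉ S) (hau : a = u) : c = u := by
    subst hau
    obtain rfl := eq_v_of_adj hb hba.symm
    by_contra hcu
    exact notMem_T hc hcu (hNv hbc)
  refine of_forall_adj_adj_eq fun a b c hba hbc ha hb hc => ?_
  by_cases hbu : b = u
  · subst hbu
    exact (eq_v_of_adj ha hba).trans (eq_v_of_adj hc hbc).symm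
  by_cases hau : a = u
  · exact hau.trans (eq_u hba hbc ha hb hc hau).symm
  by_cases hcu : c = u
  · exact (eq_u hbc hba hc hb ha hcu).trans hcu.symm
  exact hT.eq_of_adj_of_notMem hba hbc (notMem_T ha hau) (notMem_T hb hbu) (notMem_T hc hcu)

end IsPVC3

/-- Correctness of rule (B3): if `v` weakly dominates some vertex, then there is
a minimum 3-path vertex cover `S` such that `v ∈ S`, or there is `u ∈ N(v)` with
`N({u,v}) ⊆ S`, `u ∉ S` and `v ∉ S`, where `N({u,v}) = (N[u] ∪ N[v]) \ {u,v}`. -/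
theorem rule_B3_correct {V : Type*} [Fintype V] (G : SimpleGraph V) (v : V)
    (hwd : ∃ u : V, G.Adj u v ∧ ∃ x ∈ G.neighborSet u,
      x ∉ insert v (G.neighborSet v) ∧
      G.neighborSet u \ {x} ⊆ insert v (G.neighborSet v)) :
    ∃ S : Set V, IsPVC3 G S ∧ (∀ T : Set V, IsPVC3 G T → S.ncard ≤ T.ncard) ∧
      (v ∈ S ∨ ∃ u ∈ G.neighborSet v,
        ((insert u (G.neighborSet u) ∪ insert v (G.neighborSet v)) \ {u, v} : Set V) ⊆ S ∧
        u ∉ S ∧ v ∉ S) := by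
  obtain ⟨u, huv, x, hux, hxv, hNu⟩ := hwd
  suffices ∃ S, IsPVC3 G S ∧ (∀ T, IsPVC3 G T → S.ncard ≤ T.ncard) ∧
      (v ∈ S ∨ ∃ w ∈ G.neighborSet v, w ∉ S ∧ v ∉ S) by
    obtain ⟨S, hS, hSmin, hvS | ⟨w, hvw, hwS, hvS⟩⟩ := this
    · exact ⟨S, hS, hSmin, .inl hvS⟩
    · exact ⟨S, hS, hSmin, .inr ⟨w, hvw, hS.neighborhood_pair_subset hvw.symm hwS hvS, hwS, hvS⟩⟩
  obtain ⟨T, hT, hTmin⟩ := IsPVC3.exists_forall_ncard_le G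
  by_cases hvT : v ∈ T
  · exact ⟨T, hT, hTmin, .inl hvT⟩
  by_cases hNv : G.neighborSet v ⊆ T
  · have hS_le : (insert x (T \ {u})).ncard ≤ T.ncard :=
      (ncard_insert_le _ _).trans (ncard_sdiff_singleton_add_one (hNv huv.symm)).le
    refine ⟨_, hT.insert_diff_singleton huv hNu hNv hvT, fun T' hT' => hS_le.trans (hTmin T' hT'),
      .inr ⟨u, huv.symm, ?_, ?_⟩⟩
    · simp [G.ne_of_adj hux]
    · simp [ne_of_mem_of_not_mem (mem_insert v _) hxv, hvT]
  · obtain ⟨w, hvw, hwT⟩ := not_subset.mp hNv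
    exact ⟨T, hT, hTmin, .inr ⟨w, hvw, hwT, hvT⟩⟩
end
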